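/- arXiv:1102.1441 — 2 statements merged into one kernel-verified Lean document; each statement's English description precedes it below -/
import Mathlib

section
/- Let N ≥ 1 and let q ≥ 2 be an integer with largest prime factor p_max. For each prime p ≤ p_max let w_p be the probability vector on N states with value (p−1)/p at state 0, value 1/p at state N−1, and 0 elsewhere. Then for all nonnegative integers x_0, …, x_{N−1} with ∑_k x_k = q, the probability vector (x_0/q, …, x_{N−1}/q) is realizable from the switch set {w_p : p prime, p ≤ p_max} (with some finite number of pswitches). -/
noncomputable section

/-- Series composition: distribution of `min` of two independent states. -/
def smin {N : ℕ} (p q : Fin N → ℝ) : Fin N → ℝ :=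
  fun k => ∑ i, ∑ j, if min i j = k then p i * q j else 0

/-- Parallel composition: distribution of `max` of two independent states. -/
def smax {N : ℕ} (p q : Fin N → ℝ) : Fin N → ℝ :=
  fun k => ∑ i, ∑ j, if max i j = k then p i * q j else 0

/-- The point mass at state `s`. -/
def delta {N : ℕ} (s : Fin N) : Fin N → ℝ := fun i => if i = s then 1 else 0

/-- `Realizable S p m`: the vector `p` is obtained from point masses (0 pswitches)
and elements of the switch set `S` (1 pswitch each) by series and parallel
compositions, using `m` pswitches in total. -/
inductive Realizable {N : ℕ} (S : Set (Fin N → ℝ)) : (Fin N → ℝ) → ℕ → Prop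
  | point (s : Fin N) : Realizable S (delta s) 0
  | single {p : Fin N → ℝ} : p ∈ S → Realizable S p 1
  | series {p q : Fin N → ℝ} {a b : ℕ} :
      Realizable S p a → Realizable S q b → Realizable S (smin p q) (a + b)
  | parallel {p q : Fin N → ℝ} {a b : ℕ} :
      Realizable S p a → Realizable S q b → Realizable S (smax p q) (a + b)

/-- The `N`-state ½-pswitch: probability ½ on state `0`, ½ on state `N-1`,
and `0` elsewhere. -/
def halfSwitch (N : ℕ) : Fin N → ℝ :=
  fun i => (if (i : ℕ) = 0 then (1 : ℝ) / 2 else 0) + (if (i : ℕ) = N - 1 then (1 : ℝ) / 2 else 0)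

/-- The complexity function `f(n,N)`: `2^n - 1` for `n ≤ ⌈log₂ N⌉` and
`(N-1)(n - ⌈log₂ N⌉) + 2^{⌈log₂ N⌉} - 1` for `n ≥ ⌈log₂ N⌉`. -/
def f (n N : ℕ) : ℕ :=
  if n ≤ Nat.clog 2 N then 2 ^ n - 1
  else (N - 1) * (n - Nat.clog 2 N) + 2 ^ (Nat.clog 2 N) - 1

/-- The pswitch `w_p`: probability `(p-1)/p` on state `0`, `1/p` on state `N-1`,
and `0` elsewhere. -/
def qSwitch (N k : ℕ) : Fin N → ℝ :=
  fun i => (if (i : ℕ) = 0 then ((k : ℝ) - 1) / k else 0) +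
    (if (i : ℕ) = N - 1 then 1 / (k : ℝ) else 0)

/-! If a prime `p` divides `m = p r`, split `x` (with `∑ x = m`) into its lowest
`c = (p - 1) r` units `b` and the remaining `r` units `t`, so that
`x / m = ((p - 1) / p) • b / c + (1 / p) • t / r`.
This mixture is `(w_p ∗ t / r) ⊕ b / c`: the series composition with `w_p` keeps `t / r` with
probability `1 / p` and otherwise moves all mass to state `0`, and since `b / c` lives below
`t / r`, the parallel composition replaces exactly that mass at `0` by `b / c`. Both `c` and `r`
are smaller than `m` and have no new prime factors, so strong induction on `m` concludes. -/

section Compositions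

variable {N : ℕ}

lemma smin_add_left (p p' q : Fin N → ℝ) : smin (p + p') q = smin p q + smin p' q := by
  funext k
  simp only [smin, Pi.add_apply, add_mul, ← Finset.sum_add_distrib]
  refine Finset.sum_congr rfl fun i _ => Finset.sum_congr rfl fun j _ => ?_
  split_ifs <;> simp

lemma smax_add_left (p p' q : Fin N → ℝ) : smax (p + p') q = smax p q + smax p' q := by
  funext k
  simp only [smax, Pi.add_apply, add_mul, ← Finset.sum_add_distrib]
  refine Finset.sum_congr rfl fun i _ => Finset.sum_congr rfl fun j _ => ?_
  split_ifs <;> simp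

lemma smin_smul_left (a : ℝ) (p q : Fin N → ℝ) : smin (a • p) q = a • smin p q := by
  funext k
  simp only [smin, Pi.smul_apply, smul_eq_mul, Finset.mul_sum, mul_ite, mul_zero, mul_assoc]

lemma smax_smul_left (a : ℝ) (p q : Fin N → ℝ) : smax (a • p) q = a • smax p q := by
  funext k
  simp only [smax, Pi.smul_apply, smul_eq_mul, Finset.mul_sum, mul_ite, mul_zero, mul_assoc]

lemma smin_delta_apply (s : Fin N) (v : Fin N → ℝ) (k : Fin N) :
    smin (delta s) v k = ∑ j, if min s j = k then v j else 0 := by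
  rw [smin, Finset.sum_eq_single s]
  · simp [delta]
  · intro i _ hi
    simp [delta, hi]
  · simp

lemma smax_delta_apply (s : Fin N) (v : Fin N → ℝ) (k : Fin N) :
    smax (delta s) v k = ∑ j, if max s j = k then v j else 0 := by
  rw [smax, Finset.sum_eq_single s]
  · simp [delta]
  · intro i _ hi
    simp [delta, hi]
  · simp

lemma smin_delta_of_forall_le {s : Fin N} (hs : ∀ j, s ≤ j) (v : Fin N → ℝ) :
    smin (delta s) v = (∑ j, v j) • delta s := by
  funext k
  simp [smin_delta_apply, delta, min_eq_left (hs _), Finset.sum_ite_irrel, eq_comm]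

lemma smin_delta_of_forall_ge {s : Fin N} (hs : ∀ j, j ≤ s) (v : Fin N → ℝ) :
    smin (delta s) v = v := by
  funext k
  simp [smin_delta_apply, min_eq_right (hs _)]

lemma smax_delta_of_forall_le {s : Fin N} (hs : ∀ j, s ≤ j) (v : Fin N → ℝ) :
    smax (delta s) v = v := by
  funext k
  simp [smax_delta_apply, max_eq_right (hs _)]

lemma smax_eq_smul_of_le {u v : Fin N → ℝ} (huv : ∀ i j, u i ≠ 0 → v j ≠ 0 → j ≤ i) :
    smax u v = (∑ j, v j) • u := by
  funext k
  have hmax : ∀ i j,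
      (if max i j = k then u i * v j else 0) = if i = k then u i * v j else 0 := by
    intro i j
    by_cases hu : u i = 0
    · simp [hu]
    by_cases hv : v j = 0
    · simp [hv]
    rw [max_eq_left (huv i j hu hv)]
  simp [smax, hmax, Finset.mul_sum, mul_comm]

end Compositions

lemma qSwitch_eq (n k : ℕ) :
    qSwitch (n + 1) k = ((k - 1) / k : ℝ) • delta 0 + (1 / k : ℝ) • delta (Fin.last n) := by
  funext i
  simp only [qSwitch, delta, Pi.add_apply, Pi.smul_apply, smul_eq_mul, Fin.ext_iff, Fin.val_zero,
    Fin.val_last, Nat.add_sub_cancel, mul_ite, mul_one, mul_zero]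

lemma smin_qSwitch {n : ℕ} (k : ℕ) {u : Fin (n + 1) → ℝ} (hu : ∑ j, u j = 1) :
    smin (qSwitch (n + 1) k) u = ((k - 1) / k : ℝ) • delta 0 + (1 / k : ℝ) • u := by
  rw [qSwitch_eq, smin_add_left, smin_smul_left, smin_smul_left,
    smin_delta_of_forall_le Fin.zero_le, smin_delta_of_forall_ge Fin.le_last, hu, one_smul]

lemma smax_smin_qSwitch {n : ℕ} (k : ℕ) {u v : Fin (n + 1) → ℝ} (hu : ∑ j, u j = 1)
    (hv : ∑ j, v j = 1) (huv : ∀ i j, u i ≠ 0 → v j ≠ 0 → j ≤ i) :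
    smax (smin (qSwitch (n + 1) k) u) v = ((k - 1) / k : ℝ) • v + (1 / k : ℝ) • u := by
  rw [smin_qSwitch k hu, smax_add_left, smax_smul_left, smax_smul_left,
    smax_delta_of_forall_le Fin.zero_le, smax_eq_smul_of_le huv, hv, one_smul]

lemma exists_split_low_high {N : ℕ} (x : Fin N → ℕ) {c : ℕ} (hc : c ≤ ∑ i, x i) :
    ∃ b t : Fin N → ℕ, b + t = x ∧ ∑ i, b i = c ∧ ∀ i j, t i ≠ 0 → b j ≠ 0 → j ≤ i := by
  induction N generalizing c with
  | zero => exact ⟨0, 0, by ext i; exact i.elim0, by simp_all, fun i => i.elim0⟩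
  | succ N ih =>
    rw [Fin.sum_univ_succ] at hc
    by_cases hc0 : c ≤ x 0
    · refine ⟨Fin.cons c 0, Fin.cons (x 0 - c) (Fin.tail x), ?_, by simp, ?_⟩
      · ext i
        cases i using Fin.cases with
        | zero => simpa using Nat.add_sub_cancel' hc0
        | succ i => simp [Fin.tail]
      · intro i j _ hj
        cases j using Fin.cases with
        | zero => exact Fin.zero_le i
        | succ j => simp at hj
    · obtain ⟨b, t, hbt, hb, hsep⟩ := ih (Fin.tail x) (c := c - x 0) (by simp [Fin.tail]; omega)
      refine ⟨Fin.cons (x 0) b, Fin.cons 0 t, ?_, by simp [hb]; omega, ?_⟩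
      · ext i
        cases i using Fin.cases with
        | zero => simp
        | succ i => simpa [Fin.tail] using congrFun hbt i
      · intro i j hi hj
        cases i using Fin.cases with
        | zero => simp at hi
        | succ i =>
          cases j using Fin.cases with
          | zero => exact Fin.zero_le _
          | succ j => simpa using hsep i j (by simpa using hi) (by simpa using hj)

lemma exists_eq_delta_of_sum_eq_one {N : ℕ} {x : Fin N → ℕ} (hx : ∑ i, x i = 1) :
    ∃ s, (fun i => (x i : ℝ)) = delta s := by
  obtain ⟨s, -, hs⟩ := Finset.exists_ne_zero_of_sum_ne_zero (hx.symm ▸ one_ne_zero)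
  have hsplit := Finset.add_sum_erase Finset.univ x (Finset.mem_univ s)
  have hrest : ∀ i ≠ s, x i = 0 := fun i hi =>
    Finset.sum_eq_zero_iff.mp (by omega) i (Finset.mem_erase.mpr ⟨hi, Finset.mem_univ i⟩)
  refine ⟨s, funext fun i => ?_⟩
  by_cases hi : i = s
  · subst hi
    simp only [delta, if_true, Nat.cast_eq_one]
    omega
  · simp [delta, hi, hrest i hi]

lemma sum_natCast_div_eq_one {N m : ℕ} {x : Fin N → ℕ} (hx : ∑ i, x i = m) (hm : m ≠ 0) :
    ∑ i, (x i : ℝ) / m = 1 := by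
  rw [← Finset.sum_div, ← Nat.cast_sum, hx, div_self (Nat.cast_ne_zero.mpr hm)]

theorem exists_realizable_of_mem_smoothNumbers {n B : ℕ} {S : Set (Fin (n + 1) → ℝ)}
    (hS : ∀ p, p.Prime → p < B → qSwitch (n + 1) p ∈ S) {m : ℕ} (hm : m ∈ B.smoothNumbers)
    (x : Fin (n + 1) → ℕ) (hx : ∑ i, x i = m) :
    ∃ k, Realizable S (fun i => (x i : ℝ) / m) k := by
  induction m using Nat.strong_induction_on generalizing x with
  | _ m ih =>
    have hm0 := Nat.ne_zero_of_mem_smoothNumbers hm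
    obtain rfl | hm1 : m = 1 ∨ 1 < m := by omega
    · obtain ⟨s, hs⟩ := exists_eq_delta_of_sum_eq_one hx
      exact ⟨0, by simpa [hs] using Realizable.point s⟩
    obtain ⟨p, hp, hpm⟩ := Nat.exists_prime_and_dvd (show m ≠ 1 by omega)
    have hpB : p < B := Nat.mem_smoothNumbers'.mp hm p hp hpm
    obtain ⟨r, hmr⟩ := hpm
    have hr0 : r ≠ 0 := right_ne_zero_of_mul (hmr ▸ hm0)
    have hr : r ∈ B.smoothNumbers := Nat.mem_smoothNumbers_of_dvd hm (Dvd.intro_left p hmr.symm)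
    have hc : (p - 1) * r ∈ B.smoothNumbers := Nat.mul_mem_smoothNumbers
      (Nat.mem_smoothNumbers_of_lt (by have := hp.two_le; omega) (by omega)) hr
    have hcm : (p - 1) * r + r = m := by
      rw [hmr, ← Nat.succ_mul, Nat.succ_eq_add_one, Nat.sub_add_cancel hp.one_le]
    obtain ⟨b, t, hbt, hb, hsep⟩ := exists_split_low_high x (c := (p - 1) * r) (by omega)
    have ht : ∑ i, t i = r := by
      have := congrArg (fun y => ∑ i, y i) hbt
      simp only [Pi.add_apply, Finset.sum_add_distrib, hb, hx] at this
      omega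
    obtain ⟨k₁, hb'⟩ := ih ((p - 1) * r) (by omega) hc b hb
    obtain ⟨k₂, ht'⟩ := ih r (hmr ▸ lt_mul_left (Nat.pos_of_ne_zero hr0) hp.one_lt) hr t ht
    refine ⟨1 + k₂ + k₁, ?_⟩
    convert ((Realizable.single (hS p hp hpB)).series ht').parallel hb' using 1
    rw [smax_smin_qSwitch p (sum_natCast_div_eq_one ht hr0)
      (sum_natCast_div_eq_one hb (Nat.ne_zero_of_mem_smoothNumbers hc))
      fun i j hi hj => hsep i j (by rintro h; simp [h] at hi) (by rintro h; simp [h] at hj)]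
    funext i
    have hp1 : (p : ℝ) - 1 ≠ 0 := by
      have : (2 : ℝ) ≤ p := by exact_mod_cast hp.two_le
      linarith
    have hr0' : (r : ℝ) ≠ 0 := Nat.cast_ne_zero.mpr hr0
    have hp0 : (p : ℝ) ≠ 0 := Nat.cast_ne_zero.mpr hp.ne_zero
    simp only [← congrFun hbt i, hmr, Pi.add_apply, Pi.smul_apply, smul_eq_mul, Nat.cast_add,
      Nat.cast_mul, Nat.cast_sub hp.one_le, Nat.cast_one]
    field_simp

theorem prime_switch_set_general (N : ℕ) (hN : 1 ≤ N) (q : ℕ) (hq : 2 ≤ q)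
    (pmax : ℕ) (hmax : ∀ t ∈ q.primeFactors, t ≤ pmax)
    (x : Fin N → ℕ) (hx : ∑ k, x k = q) :
    ∃ m, Realizable
      {v : Fin N → ℝ | ∃ t : ℕ, t.Prime ∧ t ≤ pmax ∧ v = qSwitch N t}
      (fun i => (x i : ℝ) / q) m := by
  obtain ⟨n, rfl⟩ := Nat.exists_eq_add_of_le' hN
  have hsmooth : q ∈ (pmax + 1).smoothNumbers := Nat.mem_smoothNumbers'.mpr fun p hp hpq =>
    Nat.lt_succ_of_le (hmax p (Nat.mem_primeFactors.mpr ⟨hp, hpq, by omega⟩))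
  refine exists_realizable_of_mem_smoothNumbers ?_ hsmooth x hx
  exact fun p hp hpB => ⟨p, hp, Nat.lt_succ_iff.mp hpB, rfl⟩

/-- Prime switch sets suffice: if `pmax` is the largest prime factor of `q`,
then any `(x₀/q, …, x_{N-1}/q)` is realizable from the switch set
`{w_p : p prime, p ≤ pmax}` with some finite number of pswitches. -/
theorem prime_switch_set (N : ℕ) (hN : 1 ≤ N) (q : ℕ) (hq : 2 ≤ q)
    (pmax : ℕ) (hmem : pmax ∈ q.primeFactors) (hmax : ∀ t ∈ q.primeFactors, t ≤ pmax)
    (x : Fin N → ℕ) (hx : ∑ k, x k = q) :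
    ∃ m, Realizable
      {v : Fin N → ℝ | ∃ t : ℕ, t.Prime ∧ t ≤ pmax ∧ v = qSwitch N t}
      (fun i => (x i : ℝ) / q) m :=
  prime_switch_set_general N hN q hq pmax hmax x hx
end
end

section
/- (Robustness of rational distributions.) Fix N ≥ 2, an integer q ≥ 2, and a real ε with 0 ≤ ε ≤ 1/q. Then for every triple (p, p̃, (i, j)) in the perturbed-pair family 𝒫_q(ε) and every state s, |p̃ s − p s| ≤ (q+1)ε; moreover the boundary states satisfy |p̃ i − p i| ≤ qε and |p̃ j − p j| ≤ qε. -/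
noncomputable section

/-- The vector with value `a` at state `0`, `b` at state `N-1`, `0` elsewhere
(i.e. `a·δ₀ + b·δ_{N-1}` for `N ≥ 2`). -/
def endSwitch (N : ℕ) (a b : ℝ) : Fin N → ℝ :=
  fun i => (if (i : ℕ) = 0 then a else 0) + (if (i : ℕ) = N - 1 then b else 0)

/-- The perturbed-pair family `𝒫_q(ε)`: triples `(p, p̃, (i, j))`, where `p` is
the ideal distribution built by the denominator reduction construction on
states `i, …, j` and `p̃` is the distribution of the same circuit in which each
pswitch `((q̂-1)/q̂)·δ₀ + (1/q̂)·δ_{N-1}` (for `2 ≤ q̂ ≤ q`) is perturbed to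
`((q̂-1)/q̂ + ε̂)·δ₀ + (1/q̂ - ε̂)·δ_{N-1}` with `|ε̂| ≤ ε`. -/
inductive PertQ (N q : ℕ) (ε : ℝ) :
    (Fin N → ℝ) → (Fin N → ℝ) → Fin N → Fin N → Prop
  | point (s : Fin N) : PertQ N q ε (delta s) (delta s) s s
  | step {p p' u u' : Fin N → ℝ} {i k j : Fin N} {q' : ℕ} {ε' : ℝ} :
      PertQ N q ε p p' i k → PertQ N q ε u u' k j →
      (∀ t, p t ≠ 0 → i ≤ t ∧ t ≤ k) → (∀ t, p' t ≠ 0 → i ≤ t ∧ t ≤ k) →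
      (∀ t, u t ≠ 0 → k ≤ t ∧ t ≤ j) → (∀ t, u' t ≠ 0 → k ≤ t ∧ t ≤ j) →
      2 ≤ q' → q' ≤ q → |ε'| ≤ ε →
      PertQ N q ε
        (smax p (smin (endSwitch N (((q' : ℝ) - 1) / q') (1 / (q' : ℝ))) u))
        (smax p' (smin (endSwitch N (((q' : ℝ) - 1) / q' + ε') (1 / (q' : ℝ) - ε')) u')) i j

/-! If `p` lives on `{i, …, k}` and `u` on `{k, …, j}`, then `p ⊕ ((a δ₀ + b δ_{N-1}) ∗ u)` is
just `a p + b u`. So each step mixes the two halves with weights `(1 - 1/q̂, 1/q̂)`, perturbed to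
`(1 - 1/q̂ + ε̂, 1/q̂ - ε̂)`, and `ε ≤ 1/q` keeps every perturbed vector in the simplex. The new
error at a state is at most `(1 - 1/q̂)·err p + (1/q̂)·err u + ε`. Away from `k` only one of the two
errors is present, and since both weights are at least `1/q`, the weight in front of it absorbs the
extra `ε`; at `k` both errors are boundary errors, at most `qε`, which gives `(q+1)ε`. -/

section Composition

variable {N : ℕ}

theorem smin_add_left_s14 (f g u : Fin N → ℝ) : smin (f + g) u = smin f u + smin g u := by
  ext k
  simp only [smin, Pi.add_apply, ← Finset.sum_add_distrib]
  refine Finset.sum_congr rfl fun a _ => Finset.sum_congr rfl fun b _ => ?_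
  split_ifs <;> ring

theorem smin_smul_left_s14 (c : ℝ) (f u : Fin N → ℝ) : smin (c • f) u = c • smin f u := by
  ext k
  simp only [smin, Pi.smul_apply, smul_eq_mul, Finset.mul_sum, mul_ite, mul_zero, mul_assoc]

theorem smax_add_right (p f g : Fin N → ℝ) : smax p (f + g) = smax p f + smax p g := by
  ext k
  simp only [smax, Pi.add_apply, ← Finset.sum_add_distrib]
  refine Finset.sum_congr rfl fun a _ => Finset.sum_congr rfl fun b _ => ?_
  split_ifs <;> ring

theorem smax_smul_right (c : ℝ) (p f : Fin N → ℝ) : smax p (c • f) = c • smax p f := by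
  ext k
  simp only [smax, Pi.smul_apply, smul_eq_mul, Finset.mul_sum, mul_ite, mul_zero, mul_left_comm]

theorem smax_eq_right_of_le {p u : Fin N → ℝ} {k : Fin N} (hp : ∀ t, p t ≠ 0 → t ≤ k)
    (hu : ∀ t, u t ≠ 0 → k ≤ t) (hp1 : ∑ t, p t = 1) : smax p u = u := by
  ext s
  have hmax : ∀ a b, (if max a b = s then p a * u b else 0) = if b = s then p a * u b else 0 := by
    intro a b
    by_cases ha : p a = 0
    · simp [ha]
    by_cases hb : u b = 0
    · simp [hb]
    rw [max_eq_right ((hp a ha).trans (hu b hb))]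
  simp only [smax, hmax, Finset.sum_ite_eq', Finset.mem_univ, if_true, ← Finset.sum_mul, hp1,
    one_mul]

theorem smin_delta_left (s : Fin N) (u : Fin N → ℝ) (k : Fin N) :
    smin (delta s) u k = ∑ j, if min s j = k then u j else 0 := by
  have h : ∀ i j, (if min i j = k then delta s i * u j else 0)
      = if i = s then (if min s j = k then u j else 0) else 0 := by
    intro i j
    by_cases hi : i = s <;> simp [delta, hi]
  simp only [smin, h]
  rw [Finset.sum_comm]
  simp

theorem smax_delta_right (s : Fin N) (p : Fin N → ℝ) (k : Fin N) :
    smax p (delta s) k = ∑ i, if max i s = k then p i else 0 := by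
  have h : ∀ i j, (if max i j = k then p i * delta s j else 0)
      = if j = s then (if max i s = k then p i else 0) else 0 := by
    intro i j
    by_cases hj : j = s <;> simp [delta, hj]
  simp only [smax, h]
  simp

variable {n : ℕ}

theorem endSwitch_eq (A B : ℝ) :
    endSwitch (n + 1) A B = A • delta 0 + B • delta (Fin.last n) := by
  ext i
  simp only [endSwitch, delta, Pi.add_apply, Pi.smul_apply, smul_eq_mul, Fin.ext_iff, Fin.val_zero,
    Fin.val_last, add_tsub_cancel_right]
  split_ifs <;> simp

theorem smin_delta_zero_left (u : Fin (n + 1) → ℝ) :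
    smin (delta 0) u = (∑ t, u t) • delta 0 := by
  ext k
  by_cases hk : k = 0 <;> simp [smin_delta_left, delta, hk, eq_comm (a := (0 : Fin (n + 1)))]

theorem smin_delta_last_left (u : Fin (n + 1) → ℝ) : smin (delta (Fin.last n)) u = u := by
  ext k
  simp [smin_delta_left, min_eq_right (Fin.le_last _)]

theorem smax_delta_zero_right (p : Fin (n + 1) → ℝ) : smax p (delta 0) = p := by
  ext k
  simp [smax_delta_right]

theorem smax_smin_endSwitch (A B : ℝ) {p u : Fin (n + 1) → ℝ} {k : Fin (n + 1)}
    (hp : ∀ t, p t ≠ 0 → t ≤ k) (hu : ∀ t, u t ≠ 0 → k ≤ t) (hp1 : ∑ t, p t = 1)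
    (hu1 : ∑ t, u t = 1) :
    smax p (smin (endSwitch (n + 1) A B) u) = A • p + B • u := by
  rw [endSwitch_eq, smin_add_left_s14, smin_smul_left_s14, smin_smul_left_s14, smin_delta_zero_left,
    smin_delta_last_left, hu1, one_smul, smax_add_right, smax_smul_right, smax_smul_right,
    smax_delta_zero_right, smax_eq_right_of_le hp hu hp1]

end Composition

theorem delta_mem_stdSimplex {N : ℕ} (s : Fin N) : delta s ∈ stdSimplex ℝ (Fin N) := by
  refine ⟨fun t => ?_, by simp [delta]⟩
  unfold delta
  split_ifs <;> norm_num

section Support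

variable {N : ℕ} {f : Fin N → ℝ} {a b : Fin N}

theorem apply_eq_zero_of_support_subset (hf : ∀ t, f t ≠ 0 → a ≤ t ∧ t ≤ b) {s : Fin N}
    (hs : ¬(a ≤ s ∧ s ≤ b)) : f s = 0 :=
  not_imp_comm.mp (hf s) hs

theorem apply_eq_one_of_support_subset_singleton (hf : f ∈ stdSimplex ℝ (Fin N))
    (hsupp : ∀ t, f t ≠ 0 → a ≤ t ∧ t ≤ a) : f a = 1 := by
  rw [← hf.2, Finset.sum_eq_single a _ (by simp)]
  intro t _ hta
  exact apply_eq_zero_of_support_subset hsupp fun h => hta (le_antisymm h.2 h.1)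

variable {f' : Fin N → ℝ}

theorem abs_sub_apply_eq_zero_of_support_subset (hf : ∀ t, f t ≠ 0 → a ≤ t ∧ t ≤ b)
    (hf' : ∀ t, f' t ≠ 0 → a ≤ t ∧ t ≤ b) {s : Fin N} (hs : ¬(a ≤ s ∧ s ≤ b)) :
    |f' s - f s| = 0 := by
  rw [apply_eq_zero_of_support_subset hf hs, apply_eq_zero_of_support_subset hf' hs, sub_self,
    abs_zero]

theorem abs_sub_apply_eq_zero_of_support_subset_singleton (hf : f ∈ stdSimplex ℝ (Fin N))
    (hf' : f' ∈ stdSimplex ℝ (Fin N)) (hsupp : ∀ t, f t ≠ 0 → a ≤ t ∧ t ≤ a)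
    (hsupp' : ∀ t, f' t ≠ 0 → a ≤ t ∧ t ≤ a) : |f' a - f a| = 0 := by
  rw [apply_eq_one_of_support_subset_singleton hf hsupp,
    apply_eq_one_of_support_subset_singleton hf' hsupp', sub_self, abs_zero]

end Support

theorem abs_mix_sub_mix_le {B ε ε' x x' y y' : ℝ} (hB0 : 0 ≤ B) (hB1 : B ≤ 1) (hε' : |ε'| ≤ ε)
    (hx' : x' ∈ Set.Icc 0 1) (hy' : y' ∈ Set.Icc 0 1) :
    |((1 - B + ε') * x' + (B - ε') * y') - ((1 - B) * x + B * y)|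
      ≤ (1 - B) * |x' - x| + B * |y' - y| + ε := by
  have hxy : |x' - y'| ≤ 1 :=
    abs_sub_le_iff.mpr ⟨by linarith [hx'.2, hy'.1], by linarith [hx'.1, hy'.2]⟩
  calc _ = |(1 - B) * (x' - x) + B * (y' - y) + ε' * (x' - y')| := by ring_nf
    _ ≤ |(1 - B) * (x' - x)| + |B * (y' - y)| + |ε' * (x' - y')| := abs_add_three _ _ _
    _ ≤ (1 - B) * |x' - x| + B * |y' - y| + ε * 1 := by
      rw [abs_mul, abs_mul, abs_mul, abs_of_nonneg hB0, abs_of_nonneg (sub_nonneg.mpr hB1)]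
      gcongr
      exact (abs_nonneg _).trans hε'
    _ = _ := by ring

theorem one_div_le_weights {q q' : ℕ} (hq' : 2 ≤ q') (hq'q : q' ≤ q) :
    1 / (q : ℝ) ≤ 1 / q' ∧ 1 / (q : ℝ) ≤ 1 - 1 / q' := by
  have hq'2 : (2 : ℝ) ≤ q' := by exact_mod_cast hq'
  have hB : 1 / (q : ℝ) ≤ 1 / q' := by gcongr
  have hB2 : 1 / (q' : ℝ) ≤ 1 / 2 := by gcongr
  exact ⟨hB, by linarith⟩

theorem mix_add_le_of_eq_zero {B ε a b c : ℝ} (hB0 : 0 ≤ B) (hB1 : B ≤ 1) (hε : 0 ≤ ε)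
    (hBc : 1 ≤ B * c) (hAc : 1 ≤ (1 - B) * c)
    (hab : (a ≤ c * ε ∧ b = 0) ∨ (a = 0 ∧ b ≤ c * ε)) : (1 - B) * a + B * b + ε ≤ c * ε := by
  rcases hab with ⟨ha, rfl⟩ | ⟨rfl, hb⟩
  · nlinarith [mul_le_mul_of_nonneg_left ha (sub_nonneg.mpr hB1)]
  · nlinarith [mul_le_mul_of_nonneg_left hb hB0]

namespace PertQ

theorem le {N q : ℕ} {ε : ℝ} {p p' : Fin N → ℝ} {i j : Fin N} (h : PertQ N q ε p p' i j) :
    i ≤ j := by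
  induction h with
  | point s => exact le_rfl
  | step _ _ _ _ _ _ _ _ _ hik hkj => exact hik.trans hkj

variable {n q : ℕ} {ε : ℝ} {p p' : Fin (n + 1) → ℝ} {i j : Fin (n + 1)}

theorem mem_stdSimplex (hε : ε ≤ 1 / q) (h : PertQ (n + 1) q ε p p' i j) :
    p ∈ stdSimplex ℝ _ ∧ p' ∈ stdSimplex ℝ _ := by
  induction h with
  | point s => exact ⟨delta_mem_stdSimplex s, delta_mem_stdSimplex s⟩
  | @step p p' u u' i k j q' ε' _ _ hp hp' hu hu' hq' hq'q hε' ihp ihu =>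
    obtain ⟨hB, hA⟩ := one_div_le_weights hq' hq'q
    obtain ⟨hε'1, hε'2⟩ := abs_le.mp hε'
    rw [smax_smin_endSwitch _ _ (fun t ht => (hp t ht).2) (fun t ht => (hu t ht).1) ihp.1.2
        ihu.1.2, smax_smin_endSwitch _ _ (fun t ht => (hp' t ht).2) (fun t ht => (hu' t ht).1)
        ihp.2.2 ihu.2.2, sub_div, div_self (by positivity)]
    exact ⟨convex_stdSimplex ℝ _ ihp.1 ihu.1 (by linarith) (by linarith) (by ring),
      convex_stdSimplex ℝ _ ihp.2 ihu.2 (by linarith) (by linarith) (by ring)⟩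

theorem abs_sub_le (hε0 : 0 ≤ ε) (hε : ε ≤ 1 / q) (h : PertQ (n + 1) q ε p p' i j) :
    (∀ s, |p' s - p s| ≤ ((q : ℝ) + 1) * ε) ∧
      |p' i - p i| ≤ (q : ℝ) * ε ∧ |p' j - p j| ≤ (q : ℝ) * ε := by
  induction h with
  | point s =>
    simp only [sub_self, abs_zero]
    exact ⟨fun _ => by positivity, by positivity, by positivity⟩
  | @step p p' u u' i k j q' ε' hpik hukj hp hp' hu hu' hq' hq'q hε' ihp ihu =>
    obtain ⟨hpΔ, hp'Δ⟩ := hpik.mem_stdSimplex hε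
    obtain ⟨huΔ, hu'Δ⟩ := hukj.mem_stdSimplex hε
    have hq0 : (0 : ℝ) < q := by exact_mod_cast (by omega : 0 < q)
    rw [smax_smin_endSwitch _ _ (fun t ht => (hp t ht).2) (fun t ht => (hu t ht).1) hpΔ.2
        huΔ.2, smax_smin_endSwitch _ _ (fun t ht => (hp' t ht).2) (fun t ht => (hu' t ht).1)
        hp'Δ.2 hu'Δ.2, sub_div, div_self (by positivity)]
    obtain ⟨hB, hA⟩ := one_div_le_weights hq' hq'q
    generalize 1 / (q' : ℝ) = B at hB hA ⊢
    have hBq : 1 ≤ B * q := (div_le_iff₀ hq0).mp hB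
    have hAq : 1 ≤ (1 - B) * q := (div_le_iff₀ hq0).mp hA
    have hB0 : 0 ≤ B := (one_div_nonneg.mpr hq0.le).trans hB
    have hB1 : B ≤ 1 := by linarith [one_div_nonneg.mpr hq0.le]
    simp only [Pi.add_apply, Pi.smul_apply, smul_eq_mul]
    have mix s := abs_mix_sub_mix_le (x := p s) (y := u s) hB0 hB1 hε'
      (mem_Icc_of_mem_stdSimplex hp'Δ s) (mem_Icc_of_mem_stdSimplex hu'Δ s)
    have one_sided : ∀ s c, 1 ≤ B * c → 1 ≤ (1 - B) * c →
        (|p' s - p s| ≤ c * ε ∧ |u' s - u s| = 0) ∨ (|p' s - p s| = 0 ∧ |u' s - u s| ≤ c * ε) →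
        |(1 - B + ε') * p' s + (B - ε') * u' s - ((1 - B) * p s + B * u s)| ≤ c * ε :=
      fun s c hBc hAc hab => (mix s).trans (mix_add_le_of_eq_zero hB0 hB1 hε0 hBc hAc hab)
    have left s (hs : s < k) : |u' s - u s| = 0 :=
      abs_sub_apply_eq_zero_of_support_subset hu hu' (by simp [hs.not_ge])
    have right s (hs : k < s) : |p' s - p s| = 0 :=
      abs_sub_apply_eq_zero_of_support_subset hp hp' (by simp [hs.not_ge])
    refine ⟨fun s => ?_, ?_, ?_⟩
    · rcases lt_trichotomy s k with hs | rfl | hs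
      · exact one_sided s _ (by linarith) (by linarith) (Or.inl ⟨ihp.1 s, left s hs⟩)
      · refine (mix s).trans ?_
        nlinarith [mul_le_mul_of_nonneg_left ihp.2.2 (sub_nonneg.mpr hB1),
          mul_le_mul_of_nonneg_left ihu.2.1 hB0]
      · exact one_sided s _ (by linarith) (by linarith) (Or.inr ⟨right s hs, ihu.1 s⟩)
    · rcases hpik.le.lt_or_eq with hik | rfl
      · exact one_sided i q hBq hAq (Or.inl ⟨ihp.2.1, left i hik⟩)
      · exact one_sided i q hBq hAq (Or.inr
          ⟨abs_sub_apply_eq_zero_of_support_subset_singleton hpΔ hp'Δ hp hp', ihu.2.1⟩)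
    · rcases hukj.le.lt_or_eq with hkj | rfl
      · exact one_sided j q hBq hAq (Or.inr ⟨right j hkj, ihu.2.2⟩)
      · exact one_sided k q hBq hAq (Or.inl ⟨ihp.2.2,
          abs_sub_apply_eq_zero_of_support_subset_singleton huΔ hu'Δ hu hu'⟩)

end PertQ

theorem robustness_rational_general (N : ℕ) (q : ℕ)
    (ε : ℝ) (hε0 : 0 ≤ ε) (hε : ε ≤ 1 / (q : ℝ))
    (p p' : Fin N → ℝ) (i j : Fin N) (h : PertQ N q ε p p' i j) :
    (∀ s : Fin N, |p' s - p s| ≤ ((q : ℝ) + 1) * ε) ∧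
    |p' i - p i| ≤ (q : ℝ) * ε ∧ |p' j - p j| ≤ (q : ℝ) * ε := by
  obtain ⟨n, rfl⟩ : ∃ n, N = n + 1 := Nat.exists_eq_add_one.mpr i.pos
  exact h.abs_sub_le hε0 hε

/-- Robustness of rational distributions: for every `(p, p̃, (i, j))` in
`𝒫_q(ε)`, every state has error at most `(q+1)ε`, and the boundary states `i`
and `j` have error at most `qε`. -/
theorem robustness_rational (N : ℕ) (hN : 2 ≤ N) (q : ℕ) (hq : 2 ≤ q)
    (ε : ℝ) (hε0 : 0 ≤ ε) (hε : ε ≤ 1 / (q : ℝ))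
    (p p' : Fin N → ℝ) (i j : Fin N) (h : PertQ N q ε p p' i j) :
    (∀ s : Fin N, |p' s - p s| ≤ ((q : ℝ) + 1) * ε) ∧
    |p' i - p i| ≤ (q : ℝ) * ε ∧ |p' j - p j| ≤ (q : ℝ) * ε :=
  robustness_rational_general N q ε hε0 hε p p' i j h
end
end
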